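/- arXiv:2512.04249 — 3 statements merged into one kernel-verified Lean document; each statement's English description precedes it below -/
import Mathlib

section
/- Let A : ℝ → ℝ^{3×3} be continuous and let e₁, e₂ : ℝ → ℝ³ be solutions of ξ' = A(τ)ξ that are linearly independent for every τ. If n : ℝ → ℝ³ is differentiable with n(τ)ᵀ e₁(τ) = 0, n(τ)ᵀ e₂(τ) = 0, and ‖n(τ)‖ = 1 for all τ, then n satisfies the ODE n'(τ) = −(I − n(τ) n(τ)ᵀ) A(τ)ᵀ n(τ). -/
open Matrix

/-!
Differentiating `n ⬝ᵥ eᵢ = 0` along the flow gives `(n' + Aᵀ n) ⬝ᵥ eᵢ = 0`, and differentiating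
`n ⬝ᵥ n = 1` gives `n' ⬝ᵥ n = 0`. Hence `n' + (I - n nᵀ) Aᵀ n` is orthogonal to `e₁`, `e₂` and `n`,
which span `ℝ³`, so it vanishes.
-/

section LinearAlgebra

variable {R : Type*} [CommRing R] {m ι : Type*} [Fintype m]

theorem one_sub_vecMulVec_mulVec [DecidableEq m] (u x : m → R) :
    (1 - vecMulVec u u) *ᵥ x = x - (u ⬝ᵥ x) • u := by
  rw [sub_mulVec, one_mulVec, vecMulVec_mulVec, op_smul_eq_smul]

theorem dotProduct_eq_zero_of_mem_span {b : ι → m → R} {w x : m → R}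
    (h : ∀ i, w ⬝ᵥ b i = 0) (hx : x ∈ Submodule.span R (Set.range b)) : w ⬝ᵥ x = 0 := by
  have hle : Submodule.span R (Set.range b) ≤ LinearMap.ker (dotProductBilin R R w) :=
    Submodule.span_le.mpr <| Set.range_subset_iff.mpr h
  exact hle hx

theorem eq_zero_of_dotProduct_eq_zero_of_span_eq_top {b : ι → m → R}
    (hb : Submodule.span R (Set.range b) = ⊤) {v : m → R} (h : ∀ i, v ⬝ᵥ b i = 0) : v = 0 := by
  classical
  funext j
  simpa [dotProduct_single] using
    dotProduct_eq_zero_of_mem_span h (hb ▸ Submodule.mem_top : Pi.single j 1 ∈ _)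

theorem LinearIndependent.fin_cons_of_dotProduct_eq_zero {K : Type*} [Field K] {k : ℕ}
    {e : Fin k → m → K} (he : LinearIndependent K e) {u : m → K} (hu : u ⬝ᵥ u ≠ 0)
    (horth : ∀ i, u ⬝ᵥ e i = 0) : LinearIndependent K (Fin.cons u e : Fin (k + 1) → m → K) :=
  linearIndependent_finCons.mpr ⟨he, fun hmem => hu (dotProduct_eq_zero_of_mem_span horth hmem)⟩

end LinearAlgebra

section Calculus

variable {𝕜 : Type*} [NontriviallyNormedField 𝕜] {m : Type*} [Fintype m]
  {f g : 𝕜 → m → 𝕜} {f' g' : m → 𝕜} {x : 𝕜}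

theorem HasDerivAt.dotProduct (hf : HasDerivAt f f' x) (hg : HasDerivAt g g' x) :
    HasDerivAt (fun t => f t ⬝ᵥ g t) (f' ⬝ᵥ g x + f x ⬝ᵥ g') x := by
  simp only [_root_.dotProduct, ← Finset.sum_add_distrib]
  exact HasDerivAt.fun_sum fun i _ => (hasDerivAt_pi.mp hf i).mul (hasDerivAt_pi.mp hg i)

theorem HasDerivAt.dotProduct_add_dotProduct_eq_zero (hf : HasDerivAt f f' x)
    (hg : HasDerivAt g g' x) {c : 𝕜} (hc : ∀ t, f t ⬝ᵥ g t = c) :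
    f' ⬝ᵥ g x + f x ⬝ᵥ g' = 0 := by
  have hconst : (fun t => f t ⬝ᵥ g t) = fun _ => c := funext hc
  exact (hf.dotProduct hg).unique (hconst ▸ hasDerivAt_const x c)

theorem HasDerivAt.add_transpose_mulVec_dotProduct_eq_zero {M : Matrix m m 𝕜}
    (hf : HasDerivAt f f' x) (hg : HasDerivAt g (M *ᵥ g x) x) (horth : ∀ t, f t ⬝ᵥ g t = 0) :
    (f' + Mᵀ *ᵥ f x) ⬝ᵥ g x = 0 := by
  rw [add_dotProduct, mulVec_transpose, ← dotProduct_mulVec]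
  exact hf.dotProduct_add_dotProduct_eq_zero hg horth

end Calculus

theorem stmt_4_general (A : ℝ → Matrix (Fin 3) (Fin 3) ℝ)
    (e₁ e₂ : ℝ → (Fin 3 → ℝ))
    (he₁ : ∀ τ, HasDerivAt e₁ ((A τ).mulVec (e₁ τ)) τ)
    (he₂ : ∀ τ, HasDerivAt e₂ ((A τ).mulVec (e₂ τ)) τ)
    (hindep : ∀ τ, LinearIndependent ℝ ![e₁ τ, e₂ τ])
    (n n' : ℝ → (Fin 3 → ℝ))
    (hn : ∀ τ, HasDerivAt n (n' τ) τ)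
    (horth₁ : ∀ τ, (n τ) ⬝ᵥ (e₁ τ) = 0)
    (horth₂ : ∀ τ, (n τ) ⬝ᵥ (e₂ τ) = 0)
    (hunit : ∀ τ, (n τ) ⬝ᵥ (n τ) = 1) :
    ∀ τ, n' τ = -(((1 : Matrix (Fin 3) (Fin 3) ℝ) - vecMulVec (n τ) (n τ)).mulVec
                    ((A τ)ᵀ.mulVec (n τ))) := by
  intro τ
  have h₁ := (hn τ).add_transpose_mulVec_dotProduct_eq_zero (he₁ τ) horth₁
  have h₂ := (hn τ).add_transpose_mulVec_dotProduct_eq_zero (he₂ τ) horth₂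
  have hn' : n' τ ⬝ᵥ n τ = 0 := by
    have := (hn τ).dotProduct_add_dotProduct_eq_zero (hn τ) hunit
    rw [dotProduct_comm (n τ)] at this
    linarith
  have hspan : Submodule.span ℝ (Set.range ![n τ, e₁ τ, e₂ τ]) = ⊤ :=
    ((hindep τ).fin_cons_of_dotProduct_eq_zero (by simp [hunit])
      (Fin.forall_fin_two.mpr ⟨horth₁ τ, horth₂ τ⟩)).span_eq_top_of_card_eq_finrank (by simp)
  rw [one_sub_vecMulVec_mulVec]
  refine eq_neg_of_add_eq_zero_left (eq_zero_of_dotProduct_eq_zero_of_span_eq_top hspan ?_)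
  intro i
  rw [← add_sub_assoc, sub_dotProduct, smul_dotProduct, smul_eq_mul]
  fin_cases i
  · simp [add_dotProduct, hn', hunit, dotProduct_comm (n τ)]
  · simpa [horth₁] using h₁
  · simpa [horth₂] using h₂

theorem stmt_4 (A : ℝ → Matrix (Fin 3) (Fin 3) ℝ) (hAcont : Continuous A)
    (e₁ e₂ : ℝ → (Fin 3 → ℝ))
    (he₁ : ∀ τ, HasDerivAt e₁ ((A τ).mulVec (e₁ τ)) τ)
    (he₂ : ∀ τ, HasDerivAt e₂ ((A τ).mulVec (e₂ τ)) τ)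
    (hindep : ∀ τ, LinearIndependent ℝ ![e₁ τ, e₂ τ])
    (n n' : ℝ → (Fin 3 → ℝ))
    (hn : ∀ τ, HasDerivAt n (n' τ) τ)
    (horth₁ : ∀ τ, (n τ) ⬝ᵥ (e₁ τ) = 0)
    (horth₂ : ∀ τ, (n τ) ⬝ᵥ (e₂ τ) = 0)
    (hunit : ∀ τ, (n τ) ⬝ᵥ (n τ) = 1) :
    ∀ τ, n' τ = -(((1 : Matrix (Fin 3) (Fin 3) ℝ) - vecMulVec (n τ) (n τ)).mulVec
                    ((A τ)ᵀ.mulVec (n τ))) :=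
  stmt_4_general A e₁ e₂ he₁ he₂ hindep n n' hn horth₁ horth₂ hunit
end

section
/- Consider the scalar ODE s' = p(τ) s − k₁ q(τ) sign(s), where p, q : ℝ → ℝ are continuous and T-periodic, q ≥ 0 with ∫₀ᵀ q > 0, k₁ > 0, and ∫₀ᵀ (k₂ q − p̃) > 0 where the drift satisfies p(τ) = p̃(τ) − k₂ q(τ) with appropriate k₂. Then every Filippov solution with s(τ₀) = s₀ reaches s = 0 in finite time and remains at 0 thereafter. -/
/-!
Where `s > 0` the equation reads `s' = p s - k₁ q`, so for a primitive `P` of `p` the weighted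
quantity `s · exp (-P)` has derivative `-k₁ q exp (-P) ≤ 0`. If `s` vanished at some time and were
positive later, then at the last zero before that time `s · exp (-P)` would be `0` and could not
increase afterwards; with `s ↦ -s`, the solution stays at `0`. Before the first zero, say with
`s > 0`, the condition `∫₀ᵀ p ≤ 0` bounds `P` above by some `M` on `[τ₀, ∞)`, so even
`s · exp (-P) + k₁ e^{-M} ∫₀^t q` is antitone; as `∫₀^t q → ∞` by periodicity, `s · exp (-P)`
would become negative.
-/

open Set Filter

def IsSlidingSolution (p q : ℝ → ℝ) (k₁ : ℝ) (s : ℝ → ℝ) : Prop :=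
  ∀ τ, s τ ≠ 0 → HasDerivAt s (p τ * s τ - k₁ * q τ * Real.sign (s τ)) τ

theorem IsPreconnected.pos_of_ne_zero {X : Type*} [TopologicalSpace X] {S : Set X} {f : X → ℝ}
    (hS : IsPreconnected S) (hf : ContinuousOn f S) (hne : ∀ x ∈ S, f x ≠ 0) {a : X}
    (ha : a ∈ S) (hfa : 0 < f a) : ∀ x ∈ S, 0 < f x := by
  intro x hx
  by_contra! hfx
  obtain ⟨c, hc, hfc⟩ := hS.intermediate_value hx ha hf ⟨hfx, hfa.le⟩
  exact hne c hc hfc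

theorem Function.Periodic.bddAbove_image_Ici_intervalIntegral {p : ℝ → ℝ} {T : ℝ}
    (hp : Function.Periodic p T) (hT : 0 < T) (hint : IntervalIntegrable p MeasureTheory.volume 0 T)
    (hI : ∫ x in 0..T, p x ≤ 0) (τ₀ : ℝ) :
    BddAbove ((fun t => ∫ x in 0..t, p x) '' Ici τ₀) := by
  refine ⟨sSup ((fun t => ∫ x in 0..t, p x) '' Icc 0 T) + ⌊τ₀ / T⌋ • ∫ x in 0..T, p x, ?_⟩
  rintro _ ⟨t, ht, rfl⟩
  refine (hp.integral_le_sSup_add_zsmul_of_pos hint hT t).trans (add_le_add_right ?_ _)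
  simp only [zsmul_eq_mul]
  exact mul_le_mul_of_nonpos_right
    (Int.cast_le.2 (Int.floor_mono (div_le_div_of_nonneg_right ht hT.le))) hI

namespace IsSlidingSolution

variable {p q s P Q : ℝ → ℝ} {k₁ : ℝ}

theorem neg (h : IsSlidingSolution p q k₁ s) : IsSlidingSolution p q k₁ (-s) := by
  intro τ hτ
  refine (h τ (by simpa using hτ)).neg.congr_deriv ?_
  simp only [Pi.neg_apply, Real.sign_neg]
  ring

theorem hasDerivAt_mul_exp_neg (h : IsSlidingSolution p q k₁ s) {τ : ℝ}
    (hP : HasDerivAt P (p τ) τ) (hs : 0 < s τ) :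
    HasDerivAt (fun t => s t * Real.exp (-P t)) (-(k₁ * q τ * Real.exp (-P τ))) τ := by
  refine ((h τ hs.ne').mul hP.neg.exp).congr_deriv ?_
  rw [Real.sign_of_pos hs, Pi.neg_apply]
  ring

theorem antitoneOn_mul_exp_neg (h : IsSlidingSolution p q k₁ s) (hs : Continuous s)
    (hP : ∀ τ, HasDerivAt P (p τ) τ) (hq : ∀ τ, 0 ≤ q τ) (hk₁ : 0 ≤ k₁) {D : Set ℝ}
    (hD : Convex ℝ D) (hpos : ∀ τ ∈ interior D, 0 < s τ) :
    AntitoneOn (fun t => s t * Real.exp (-P t)) D := by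
  have hPc : Continuous P := continuous_iff_continuousAt.2 fun τ => (hP τ).continuousAt
  refine antitoneOn_of_hasDerivWithinAt_nonpos hD (by fun_prop)
    (fun τ hτ => (h.hasDerivAt_mul_exp_neg (hP τ) (hpos τ hτ)).hasDerivWithinAt) fun τ _ => ?_
  have := mul_nonneg (mul_nonneg hk₁ (hq τ)) (Real.exp_pos (-P τ)).le
  linarith

theorem nonpos_of_eq_zero (h : IsSlidingSolution p q k₁ s) (hs : Continuous s)
    (hP : ∀ τ, HasDerivAt P (p τ) τ) (hq : ∀ τ, 0 ≤ q τ) (hk₁ : 0 ≤ k₁) {τ₁ τ₂ : ℝ}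
    (h12 : τ₁ ≤ τ₂) (h0 : s τ₁ = 0) : s τ₂ ≤ 0 := by
  by_contra! hpos
  obtain ⟨σ, ⟨⟨hσ₁, hσ₂⟩, hsσ⟩, hσmax⟩ :=
    (isCompact_Icc.inter_right (isClosed_singleton.preimage hs) :
      IsCompact (Icc τ₁ τ₂ ∩ s ⁻¹' {0})).exists_isGreatest ⟨τ₁, ⟨le_rfl, h12⟩, h0⟩
  have hsσ : s σ = 0 := hsσ
  have hστ₂ : σ < τ₂ := hσ₂.lt_of_ne (by rintro rfl; exact hpos.ne' hsσ)
  have hpos' : ∀ τ ∈ Ioc σ τ₂, 0 < s τ :=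
    isPreconnected_Ioc.pos_of_ne_zero hs.continuousOn
      (fun τ hτ hsτ => (hσmax ⟨⟨hσ₁.trans hτ.1.le, hτ.2⟩, hsτ⟩).not_gt hτ.1)
      (right_mem_Ioc.2 hστ₂) hpos
  have hanti := h.antitoneOn_mul_exp_neg hs hP hq hk₁ (convex_Icc σ τ₂)
    (by simpa only [interior_Icc] using fun τ hτ => hpos' τ (Ioo_subset_Ioc_self hτ))
  have := hanti (left_mem_Icc.2 hσ₂) (right_mem_Icc.2 hσ₂) hσ₂
  simp only [hsσ, zero_mul] at this
  exact (mul_pos hpos (Real.exp_pos _)).not_ge this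

theorem eq_zero_of_eq_zero (h : IsSlidingSolution p q k₁ s) (hs : Continuous s)
    (hP : ∀ τ, HasDerivAt P (p τ) τ) (hq : ∀ τ, 0 ≤ q τ) (hk₁ : 0 ≤ k₁) {τ₁ τ₂ : ℝ}
    (h12 : τ₁ ≤ τ₂) (h0 : s τ₁ = 0) : s τ₂ = 0 :=
  le_antisymm (h.nonpos_of_eq_zero hs hP hq hk₁ h12 h0)
    (neg_nonpos.1 (h.neg.nonpos_of_eq_zero hs.neg hP hq hk₁ h12 (by simp [h0])))

theorem exists_eq_zero (h : IsSlidingSolution p q k₁ s) (hs : Continuous s)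
    (hP : ∀ τ, HasDerivAt P (p τ) τ) (hQ : ∀ τ, HasDerivAt Q (q τ) τ) (hq : ∀ τ, 0 ≤ q τ)
    (hk₁ : 0 < k₁) {τ₀ : ℝ} (hPbdd : BddAbove (P '' Ici τ₀)) (hQtop : Tendsto Q atTop atTop) :
    ∃ τ, τ₀ ≤ τ ∧ s τ = 0 := by
  wlog hs₀ : 0 < s τ₀ generalizing s
  · rcases (not_lt.1 hs₀).lt_or_eq with hneg | hzero
    · obtain ⟨τ, hτ, h0⟩ := this h.neg hs.neg (by simpa using hneg)
      exact ⟨τ, hτ, by simpa using h0⟩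
    · exact ⟨τ₀, le_rfl, hzero⟩
  by_contra! hne
  have hpos := isPreconnected_Ici.pos_of_ne_zero hs.continuousOn hne self_mem_Ici hs₀
  obtain ⟨M, hM⟩ := hPbdd
  have hPc : Continuous P := continuous_iff_continuousAt.2 fun τ => (hP τ).continuousAt
  have hQc : Continuous Q := continuous_iff_continuousAt.2 fun τ => (hQ τ).continuousAt
  set c := k₁ * Real.exp (-M)
  set G := fun t => s t * Real.exp (-P t) + c * Q t
  have hanti : AntitoneOn G (Ici τ₀) := by
    refine antitoneOn_of_hasDerivWithinAt_nonpos (convex_Ici τ₀) (by fun_prop)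
      (fun τ hτ => ((h.hasDerivAt_mul_exp_neg (hP τ) (hpos τ (interior_subset hτ))).add
        ((hQ τ).const_mul c)).hasDerivWithinAt) fun τ hτ => ?_
    have hexp : Real.exp (-M) ≤ Real.exp (-P τ) :=
      Real.exp_le_exp.2 (neg_le_neg (hM ⟨τ, interior_subset hτ, rfl⟩))
    have := mul_le_mul_of_nonneg_left hexp (mul_nonneg hk₁.le (hq τ))
    simp only [c]
    linarith
  obtain ⟨t, hGt, ht⟩ :=
    (((hQtop.const_mul_atTop (by positivity : 0 < c)).eventually_gt_atTop (G τ₀)).and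
      (eventually_ge_atTop τ₀)).exists
  have := hanti self_mem_Ici ht ht
  have := mul_pos (hpos t ht) (Real.exp_pos (-P t))
  simp only [G] at *
  linarith

end IsSlidingSolution

theorem stmt_12_general (T : ℝ) (hT : 0 < T)
    (ptilde q : ℝ → ℝ) (hptilde : Continuous ptilde) (hq : Continuous q)
    (hptildeT : ∀ τ, ptilde (τ + T) = ptilde τ) (hqT : ∀ τ, q (τ + T) = q τ)
    (hqnonneg : ∀ τ, 0 ≤ q τ) (hqpos : 0 < ∫ τ in (0:ℝ)..T, q τ)
    (k₁ k₂ : ℝ) (hk₁ : 0 < k₁)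
    (hk₂ : 0 < ∫ τ in (0:ℝ)..T, (k₂ * q τ - ptilde τ))
    (p : ℝ → ℝ) (hp : ∀ τ, p τ = ptilde τ - k₂ * q τ)
    (s : ℝ → ℝ) (τ₀ : ℝ)
    (hscont : Continuous s)
    (hode : ∀ τ, s τ ≠ 0 →
      HasDerivAt s (p τ * s τ - k₁ * q τ * Real.sign (s τ)) τ) :
    ∃ τᵣ : ℝ, τ₀ ≤ τᵣ ∧ ∀ τ, τᵣ ≤ τ → s τ = 0 := by
  have hpc : Continuous p := funext hp ▸ by fun_prop
  have hpT : Function.Periodic p T := fun τ => by simp only [hp, hptildeT, hqT]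
  have hI : ∫ τ in (0:ℝ)..T, p τ ≤ 0 := by
    have : ∫ τ in (0:ℝ)..T, p τ = -∫ τ in (0:ℝ)..T, (k₂ * q τ - ptilde τ) := by
      simp only [hp, ← intervalIntegral.integral_neg, neg_sub]
    linarith
  have hP := fun τ => (hpc.integral_hasStrictDerivAt 0 τ).hasDerivAt
  obtain ⟨τᵣ, hτᵣ, hsτᵣ⟩ := IsSlidingSolution.exists_eq_zero hode hscont hP
    (fun τ => (hq.integral_hasStrictDerivAt 0 τ).hasDerivAt) hqnonneg hk₁
    (hpT.bddAbove_image_Ici_intervalIntegral hT (hpc.intervalIntegrable 0 T) hI τ₀)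
    (Function.Periodic.tendsto_atTop_intervalIntegral_of_pos hqT hqpos hT)
  exact ⟨τᵣ, hτᵣ, fun τ hτ =>
    IsSlidingSolution.eq_zero_of_eq_zero hode hscont hP hqnonneg hk₁.le hτ hsτᵣ⟩

/-- Sliding dynamics `s' = p s − k₁ q sign(s)` with `p = ptilde − k₂ q`:
every (Filippov) solution reaches `0` in finite time and stays there.
A Filippov solution is formalized as a continuous function satisfying the
ODE at every point where `s ≠ 0` (away from the discontinuity surface). -/
theorem stmt_12 (T : ℝ) (hT : 0 < T)
    (ptilde q : ℝ → ℝ) (hptilde : Continuous ptilde) (hq : Continuous q)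
    (hptildeT : ∀ τ, ptilde (τ + T) = ptilde τ) (hqT : ∀ τ, q (τ + T) = q τ)
    (hqnonneg : ∀ τ, 0 ≤ q τ) (hqpos : 0 < ∫ τ in (0:ℝ)..T, q τ)
    (k₁ k₂ : ℝ) (hk₁ : 0 < k₁)
    (hk₂ : 0 < ∫ τ in (0:ℝ)..T, (k₂ * q τ - ptilde τ))
    (p : ℝ → ℝ) (hp : ∀ τ, p τ = ptilde τ - k₂ * q τ)
    (s : ℝ → ℝ) (τ₀ s₀ : ℝ) (hs₀ : s τ₀ = s₀)
    (hscont : Continuous s)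
    (hode : ∀ τ, s τ ≠ 0 →
      HasDerivAt s (p τ * s τ - k₁ * q τ * Real.sign (s τ)) τ) :
    ∃ τᵣ : ℝ, τ₀ ≤ τᵣ ∧ ∀ τ, τᵣ ≤ τ → s τ = 0 :=
  stmt_12_general T hT ptilde q hptilde hq hptildeT hqT hqnonneg hqpos k₁ k₂ hk₁ hk₂ p hp s τ₀
    hscont hode
end

section
/- Let Ψ ∈ ℝ^{3×3} be nondefective (diagonalizable over ℂ), J ∈ ℝ^{2×3} with rank J = 2, P ∈ ℝ^{2×2} symmetric positive definite, and α, T > 0. Suppose ξᵀ Ψᵀ Jᵀ P J Ψ ξ ≤ e^{−αT} ξᵀ Jᵀ P J ξ for all ξ ∈ ℝ³. Then Ψ has at least two eigenvalues (counted with multiplicity) of modulus strictly less than 1. -/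
/-!
If `Ψ z = μ z` with `μ = a + i b` and `z = x + i y`, `x, y` real, then `Ψ x = a x - b y` and
`Ψ y = b x + a y`, so for any quadratic form `Q`, `Q (Ψ x) + Q (Ψ y) = |μ|² (Q x + Q y)`.
With `Q ξ = ξᵀ Jᵀ P J ξ ≥ 0` and the contraction `Q (Ψ ξ) ≤ e^{-αT} Q ξ`, an
eigenvalue with `|μ| ≥ 1` forces `Q x = Q y = 0`, i.e. `x, y ∈ ker J`. Since `rank J = 2`,
`ker J` is a line, so such eigenvectors are all multiples of one vector; as they belong to an
eigenbasis, there is at most one of them.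
-/

open Matrix Polynomial

theorem Matrix.roots_charpoly_of_eigenbasis {K n : Type*} [Field K] [Fintype n] [DecidableEq n]
    (A : Matrix n n K) (b : Module.Basis n K (n → K)) (μ : n → K)
    (hb : ∀ i, A *ᵥ b i = μ i • b i) :
    A.charpoly.roots = Finset.univ.val.map μ := by
  have hdiag : LinearMap.toMatrix b b A.mulVecLin = diagonal μ := by
    ext i j
    rcases eq_or_ne i j with rfl | hij
    · simp [LinearMap.toMatrix_apply, hb]
    · simp [LinearMap.toMatrix_apply, hb, hij]
  rw [← charpoly_mulVecLin, ← LinearMap.charpoly_toMatrix _ b, hdiag, charpoly_diagonal,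
    roots_prod _ _ (Finset.prod_ne_zero_iff.2 fun i _ => X_sub_C_ne_zero (μ i))]
  simp

theorem LinearIndependent.card_le_one_of_mem_span_singleton {K V ι : Type*} [DivisionRing K]
    [AddCommGroup V] [Module K V] [Fintype ι] {v : ι → V} (hv : LinearIndependent K v) {w : V}
    (h : ∀ i, v i ∈ K ∙ w) : Fintype.card ι ≤ 1 :=
  calc Fintype.card ι ≤ Module.finrank K (Submodule.span K (Set.range v)) :=
        linearIndependent_iff_card_le_finrank_span.1 hv
    _ ≤ Module.finrank K (K ∙ w) :=
        Submodule.finrank_mono (Submodule.span_le.2 (Set.range_subset_iff.2 h))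
    _ ≤ 1 := by simpa using finrank_span_le_card ({w} : Set V)

theorem Matrix.exists_ker_mulVecLin_eq_span_singleton {K m n : Type*} [Field K] [Fintype m]
    [Fintype n] (J : Matrix m n K) (hJ : Fintype.card n ≤ J.rank + 1) :
    ∃ w, LinearMap.ker J.mulVecLin = K ∙ w := by
  have hdim := LinearMap.finrank_range_add_finrank_ker J.mulVecLin
  rw [← Matrix.rank, Module.finrank_fintype_fun_eq_card] at hdim
  have := (Submodule.finrank_le_one_iff_isPrincipal (LinearMap.ker J.mulVecLin)).1 (by omega)
  exact Submodule.IsPrincipal.principal _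

section Realification

variable {m n : Type*} [Fintype n]

theorem re_mulVec_map_ofReal (A : Matrix m n ℝ) (z : n → ℂ) :
    Complex.re ∘ (A.map Complex.ofReal *ᵥ z) = A *ᵥ (Complex.re ∘ z) := by
  ext k
  simp [mulVec, dotProduct, Complex.re_sum]

theorem im_mulVec_map_ofReal (A : Matrix m n ℝ) (z : n → ℂ) :
    Complex.im ∘ (A.map Complex.ofReal *ᵥ z) = A *ᵥ (Complex.im ∘ z) := by
  ext k
  simp [mulVec, dotProduct, Complex.im_sum]

end Realification

theorem mem_span_ofReal_of_re_mem_of_im_mem {n : Type*} {w : n → ℝ} {z : n → ℂ}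
    (hre : Complex.re ∘ z ∈ ℝ ∙ w) (him : Complex.im ∘ z ∈ ℝ ∙ w) :
    z ∈ ℂ ∙ (Complex.ofReal ∘ w) := by
  obtain ⟨s, hs⟩ := Submodule.mem_span_singleton.1 hre
  obtain ⟨t, ht⟩ := Submodule.mem_span_singleton.1 him
  refine Submodule.mem_span_singleton.2 ⟨⟨s, t⟩, funext fun k => Complex.ext ?_ ?_⟩
  · simpa using congrFun hs k
  · simpa using congrFun ht k

section QuadraticForm

variable {n : Type*} [Fintype n]

theorem dotProduct_mulVec_rotation_add {R : Type*} [CommRing R] (M : Matrix n n R)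
    (x y : n → R) (a b : R) :
    (a • x - b • y) ⬝ᵥ M *ᵥ (a • x - b • y) + (b • x + a • y) ⬝ᵥ M *ᵥ (b • x + a • y)
      = (a ^ 2 + b ^ 2) * (x ⬝ᵥ M *ᵥ x + y ⬝ᵥ M *ᵥ y) := by
  simp only [mulVec_add, mulVec_sub, mulVec_smul, dotProduct_add, dotProduct_sub,
    add_dotProduct, sub_dotProduct, dotProduct_smul, smul_dotProduct, smul_eq_mul]
  ring

theorem dotProduct_transpose_mul_mul_mulVec {m R : Type*} [Fintype m] [CommSemiring R]
    (J : Matrix m n R) (P : Matrix m m R) (x : n → R) :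
    x ⬝ᵥ (Jᵀ * P * J) *ᵥ x = J *ᵥ x ⬝ᵥ P *ᵥ (J *ᵥ x) := by
  rw [Matrix.mul_assoc, ← mulVec_mulVec, dotProduct_mulVec, vecMul_transpose, ← mulVec_mulVec]

theorem quadForm_re_eq_zero_and_im_eq_zero_of_eigenvector {Ψ M : Matrix n n ℝ} {c : ℝ}
    (hM : ∀ ξ, 0 ≤ ξ ⬝ᵥ M *ᵥ ξ) (hΨ : ∀ ξ, Ψ *ᵥ ξ ⬝ᵥ M *ᵥ (Ψ *ᵥ ξ) ≤ c * (ξ ⬝ᵥ M *ᵥ ξ))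
    {μ : ℂ} {z : n → ℂ} (hz : Ψ.map Complex.ofReal *ᵥ z = μ • z) (hμ : c < ‖μ‖ ^ 2) :
    (Complex.re ∘ z) ⬝ᵥ M *ᵥ (Complex.re ∘ z) = 0 ∧
      (Complex.im ∘ z) ⬝ᵥ M *ᵥ (Complex.im ∘ z) = 0 := by
  set x := Complex.re ∘ z
  set y := Complex.im ∘ z
  have hx : Ψ *ᵥ x = μ.re • x - μ.im • y := by
    rw [← re_mulVec_map_ofReal, hz]
    ext k
    simp [x, y]
  have hy : Ψ *ᵥ y = μ.im • x + μ.re • y := by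
    rw [← im_mulVec_map_ofReal, hz]
    ext k
    simp [x, y, add_comm]
  have hrot := dotProduct_mulVec_rotation_add M x y μ.re μ.im
  have hnorm : μ.re ^ 2 + μ.im ^ 2 = ‖μ‖ ^ 2 := by linarith [Complex.sq_norm_sub_sq_re μ]
  rw [← hx, ← hy, hnorm] at hrot
  have hsum : x ⬝ᵥ M *ᵥ x + y ⬝ᵥ M *ᵥ y ≤ 0 := by
    nlinarith [hΨ x, hΨ y, hM x, hM y]
  constructor <;> linarith [hM x, hM y]

theorem mulVec_re_eq_zero_and_mulVec_im_eq_zero_of_eigenvector {m : Type*} [Fintype m]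
    {Ψ : Matrix n n ℝ} {J : Matrix m n ℝ} {P : Matrix m m ℝ} (hP : P.PosDef) {c : ℝ}
    (hΨ : ∀ ξ, Ψ *ᵥ ξ ⬝ᵥ (Jᵀ * P * J) *ᵥ (Ψ *ᵥ ξ) ≤ c * (ξ ⬝ᵥ (Jᵀ * P * J) *ᵥ ξ))
    {μ : ℂ} {z : n → ℂ} (hz : Ψ.map Complex.ofReal *ᵥ z = μ • z) (hμ : c < ‖μ‖ ^ 2) :
    J *ᵥ (Complex.re ∘ z) = 0 ∧ J *ᵥ (Complex.im ∘ z) = 0 := by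
  have hnonneg (ξ : n → ℝ) : 0 ≤ ξ ⬝ᵥ (Jᵀ * P * J) *ᵥ ξ := by
    simpa [dotProduct_transpose_mul_mul_mulVec] using
      hP.posSemidef.dotProduct_mulVec_nonneg (J *ᵥ ξ)
  have hker (ξ : n → ℝ) (h : ξ ⬝ᵥ (Jᵀ * P * J) *ᵥ ξ = 0) : J *ᵥ ξ = 0 := by
    by_contra hne
    have := hP.dotProduct_mulVec_pos hne
    simp_all [dotProduct_transpose_mul_mul_mulVec]
  obtain ⟨hre, him⟩ := quadForm_re_eq_zero_and_im_eq_zero_of_eigenvector hnonneg hΨ hz hμ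
  exact ⟨hker _ hre, hker _ him⟩

end QuadraticForm

theorem stmt_13_general (Ψ : Matrix (Fin 3) (Fin 3) ℝ)
    (hdiag : ∃ b : Module.Basis (Fin 3) ℂ (Fin 3 → ℂ),
      ∀ i, ∃ μ : ℂ, (Ψ.map (Complex.ofReal)).mulVec (b i) = μ • b i)
    (J : Matrix (Fin 2) (Fin 3) ℝ) (hJ : J.rank = 2)
    (P : Matrix (Fin 2) (Fin 2) ℝ) (hP : P.PosDef)
    (α T : ℝ) (hα : 0 < α) (hT : 0 < T)
    (hineq : ∀ ξ : Fin 3 → ℝ,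
      (Ψ.mulVec ξ) ⬝ᵥ ((Jᵀ * P * J).mulVec (Ψ.mulVec ξ))
        ≤ Real.exp (-α * T) * (ξ ⬝ᵥ ((Jᵀ * P * J).mulVec ξ))) :
    2 ≤ Multiset.card
      (((Ψ.map (Complex.ofReal)).charpoly.roots).filter (fun μ => ‖μ‖ < 1)) := by
  obtain ⟨b, hb⟩ := hdiag
  choose μ hμ using hb
  obtain ⟨w, hw⟩ := J.exists_ker_mulVecLin_eq_span_singleton (by simp [hJ])
  have hcontr : Real.exp (-α * T) < 1 := Real.exp_lt_one_iff.2 (by nlinarith)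
  have hbad (i : {i // ¬ ‖μ i‖ < 1}) : b i ∈ ℂ ∙ (Complex.ofReal ∘ w) := by
    have hμi : Real.exp (-α * T) < ‖μ i‖ ^ 2 := by nlinarith [not_lt.1 i.2]
    obtain ⟨hre, him⟩ :=
      mulVec_re_eq_zero_and_mulVec_im_eq_zero_of_eigenvector hP hineq (hμ i) hμi
    exact mem_span_ofReal_of_re_mem_of_im_mem (hw ▸ hre) (hw ▸ him)
  have hbad_card :=
    (b.linearIndependent.comp _ Subtype.val_injective).card_le_one_of_mem_span_singleton hbad
  rw [roots_charpoly_of_eigenbasis _ b μ hμ, Multiset.filter_map, Multiset.card_map]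
  change 2 ≤ (Finset.univ.filter fun i => ‖μ i‖ < 1).card
  rw [← Fintype.card_subtype]
  have hcompl := Fintype.card_subtype_compl (fun i => ‖μ i‖ < 1)
  simp only [Fintype.card_fin] at hcompl
  omega

theorem stmt_13 (Ψ : Matrix (Fin 3) (Fin 3) ℝ)
    (hdiag : ∃ b : Module.Basis (Fin 3) ℂ (Fin 3 → ℂ),
      ∀ i, ∃ μ : ℂ, (Ψ.map (Complex.ofReal)).mulVec (b i) = μ • b i)
    (J : Matrix (Fin 2) (Fin 3) ℝ) (hJ : J.rank = 2)
    (P : Matrix (Fin 2) (Fin 2) ℝ) (hP : P.PosDef) (hPsymm : Pᵀ = P)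
    (α T : ℝ) (hα : 0 < α) (hT : 0 < T)
    (hineq : ∀ ξ : Fin 3 → ℝ,
      (Ψ.mulVec ξ) ⬝ᵥ ((Jᵀ * P * J).mulVec (Ψ.mulVec ξ))
        ≤ Real.exp (-α * T) * (ξ ⬝ᵥ ((Jᵀ * P * J).mulVec ξ))) :
    2 ≤ Multiset.card
      (((Ψ.map (Complex.ofReal)).charpoly.roots).filter (fun μ => ‖μ‖ < 1)) :=
  stmt_13_general Ψ hdiag J hJ P hP α T hα hT hineq
end
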